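/- Let I_1 and I_2 be non-constant inner functions such that the H^∞-Toeplitz kernel N^∞[conj(I_1)·I_2] is nontrivial, i.e., there exists a nonzero g ∈ H^∞ with conj(I_1)·I_2·g ∈ conj(H^∞) a.e. on R. Then I_2 ⪯ I_1, that is, D(I_2) ⊆ D(I_1). -/

import Mathlib

open MeasureTheory Filter Set Complex
open scoped ENNReal NNReal Topology

noncomputable section

/-- The open upper half-plane `ℂ₊`. -/
def UHP : Set ℂ := {z : ℂ | 0 < z.im}

/-- Canonical boundary value of `f : ℂ → ℂ` at `x ∈ ℝ`:
the vertical (non-tangential) limit, whenever it exists. -/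
def bdry (f : ℂ → ℂ) (x : ℝ) : ℂ :=
  limUnder (nhdsWithin (0:ℝ) (Set.Ioi (0:ℝ))) (fun y : ℝ => f ((x : ℂ) + y * Complex.I))

/-- `f` has a boundary value at `x` (then it equals `bdry f x`). -/
def HasBdry (f : ℂ → ℂ) (x : ℝ) : Prop :=
  Tendsto (fun y : ℝ => f ((x : ℂ) + y * Complex.I)) (nhdsWithin (0:ℝ) (Set.Ioi (0:ℝ)))
    (nhds (bdry f x))

/-- Membership in the Hardy space `H²(ℂ₊)`. -/
def MemH2 (f : ℂ → ℂ) : Prop :=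
  DifferentiableOn ℂ f UHP ∧ (∀ᵐ x : ℝ, HasBdry f x) ∧
  ∃ M : ℝ≥0∞, M ≠ ⊤ ∧ ∀ y : ℝ, 0 < y →
    (∫⁻ x : ℝ, (‖f ((x:ℂ) + y * Complex.I)‖₊ : ℝ≥0∞) ^ 2) ≤ M

/-- Membership in `H^∞(ℂ₊)` (with a.e. existing boundary values). -/
def MemHinf (f : ℂ → ℂ) : Prop :=
  DifferentiableOn ℂ f UHP ∧ (∀ᵐ x : ℝ, HasBdry f x) ∧ ∃ M : ℝ, ∀ z ∈ UHP, ‖f z‖ ≤ M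

/-- Inner function in `ℂ₊`: bounded analytic with unimodular boundary values a.e. -/
def IsInner (f : ℂ → ℂ) : Prop :=
  DifferentiableOn ℂ f UHP ∧ (∀ z ∈ UHP, ‖f z‖ ≤ 1) ∧
  ∀ᵐ x : ℝ, HasBdry f x ∧ ‖bdry f x‖ = 1

/-- Outer function in `ℂ₊`: zero-free analytic function whose log-modulus is the
Poisson extension of its boundary log-modulus. -/
def IsOuter (f : ℂ → ℂ) : Prop :=
  DifferentiableOn ℂ f UHP ∧ (∀ z ∈ UHP, f z ≠ 0) ∧ (∀ᵐ x : ℝ, HasBdry f x) ∧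
  ∀ z ∈ UHP, Real.log ‖f z‖ =
    (1 / Real.pi) * ∫ t : ℝ, (z.im / ((z.re - t) ^ 2 + z.im ^ 2)) * Real.log ‖bdry f t‖

/-- Membership in the Toeplitz kernel `N[U]` for a unimodular boundary symbol `U`:
`f ∈ H²` and `U·f ∈ conj(H²)` on the boundary. -/
def MemKer (U : ℝ → ℂ) (f : ℂ → ℂ) : Prop :=
  MemH2 f ∧ ∃ g : ℂ → ℂ, MemH2 g ∧ ∀ᵐ x : ℝ, U x * bdry f x = star (bdry g x)

/-- `f` is nontrivial on `ℂ₊`. -/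
def NontrivialOnUHP (f : ℂ → ℂ) : Prop := ∃ z ∈ UHP, f z ≠ 0

/-- The boundary symbol `conj θ · I`. -/
def symb (θ I : ℂ → ℂ) : ℝ → ℂ := fun x => star (bdry θ x) * bdry I x

/-- The dominance set `D(θ)`: inner functions `I` with `N[conj θ · I] ≠ 0`. -/
def Dom (θ : ℂ → ℂ) : Set (ℂ → ℂ) :=
  {I | IsInner I ∧ ∃ f : ℂ → ℂ, MemKer (symb θ I) f ∧ NontrivialOnUHP f}

/-- Membership in the model space `K_θ = N[conj θ]`. -/
def MemKtheta (θ f : ℂ → ℂ) : Prop := MemKer (fun x => star (bdry θ x)) f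

/-- Total elements of `D(θ)`: those `I` for which `N[conj θ · I]` contains a purely
outer function, i.e. an outer `f` with `conj θ · I · f = conj f` a.e. on `ℝ`. -/
def DomT (θ : ℂ → ℂ) : Set (ℂ → ℂ) :=
  {I | IsInner I ∧ ∃ f : ℂ → ℂ, MemH2 f ∧ IsOuter f ∧
    ∀ᵐ x : ℝ, star (bdry θ x) * bdry I x * bdry f x = star (bdry f x)}

/-- `I` divides `J`: `J / I` is inner. -/
def Divides (I J : ℂ → ℂ) : Prop :=
  ∃ Q : ℂ → ℂ, IsInner Q ∧ ∀ z ∈ UHP, J z = I z * Q z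

/-- Base elements of `D(θ)`: maximal with respect to division (they divide no element
of `D(θ)` other than their own unimodular multiples). -/
def DomB (θ : ℂ → ℂ) : Set (ℂ → ℂ) :=
  {I | I ∈ Dom θ ∧ ∀ J ∈ Dom θ, Divides I J →
    ∃ c : ℂ, ‖c‖ = 1 ∧ ∀ z ∈ UHP, J z = c * I z}

/-- Meromorphic inner function: here `θ : ℂ → ℂ` denotes the meromorphic extension
to `ℂ` of an inner function in `ℂ₊`. -/
def IsMIF (θ : ℂ → ℂ) : Prop := IsInner θ ∧ MeromorphicOn θ Set.univ

/-- Poisson summability of a function on `ℝ`. -/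
def PoissonSummable (φ : ℝ → ℝ) : Prop := Integrable (fun t : ℝ => φ t / (1 + t ^ 2))

/-- `ψ` is a harmonic conjugate of `φ` on `ℝ`: `ψ` is the a.e. boundary value of the
imaginary part of an analytic function on `ℂ₊` whose real part is the Poisson
extension of `φ`. -/
def IsHarmConjOf (ψ φ : ℝ → ℝ) : Prop :=
  PoissonSummable φ ∧
  ∃ F : ℂ → ℂ, DifferentiableOn ℂ F UHP ∧
    (∀ z ∈ UHP, (F z).re =
      (1 / Real.pi) * ∫ t : ℝ, (z.im / ((z.re - t) ^ 2 + z.im ^ 2)) * φ t) ∧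
    ∀ᵐ x : ℝ, Tendsto (fun y : ℝ => (F ((x:ℂ) + y * Complex.I)).im)
      (nhdsWithin (0:ℝ) (Set.Ioi (0:ℝ))) (nhds (ψ x))

/-- `Log|H²| = { log|g| : 0 ≠ g ∈ H²(ℂ₊) }` (as boundary functions, up to a.e. equality). -/
def MemLogH2 (u : ℝ → ℝ) : Prop :=
  ∃ g : ℂ → ℂ, MemH2 g ∧ NontrivialOnUHP g ∧ ∀ᵐ x : ℝ, u x = Real.log ‖bdry g x‖

/-- `E^#(z) = conj (E (conj z))`. -/
def Esharp (E : ℂ → ℂ) : ℂ → ℂ := fun z => star (E (star z))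

/-- Hermite–Biehler function: entire, `|E(conj z)| < |E z|` on `ℂ₊`, no real zeros. -/
def IsHB (E : ℂ → ℂ) : Prop :=
  Differentiable ℂ E ∧ (∀ z ∈ UHP, ‖E (star z)‖ < ‖E z‖) ∧ ∀ x : ℝ, E (x:ℂ) ≠ 0

/-- The meromorphic inner function `θ_E = E^#/E` of a de Branges function. -/
def thetaOf (E : ℂ → ℂ) : ℂ → ℂ := fun z => Esharp E z / E z

/-- Membership in the de Branges space `B(E)`: `F` entire with `F/E, F^#/E ∈ H²(ℂ₊)`. -/
def MemDB (E F : ℂ → ℂ) : Prop :=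
  Differentiable ℂ F ∧ MemH2 (fun z => F z / E z) ∧ MemH2 (fun z => Esharp F z / E z)

/-- The Nevanlinna class `N(ℂ₊)`: quotients of bounded analytic functions. -/
def MemNevanlinna (f : ℂ → ℂ) : Prop :=
  ∃ g h : ℂ → ℂ, DifferentiableOn ℂ g UHP ∧ DifferentiableOn ℂ h UHP ∧
    (∀ z ∈ UHP, ‖g z‖ ≤ 1) ∧ (∀ z ∈ UHP, ‖h z‖ ≤ 1) ∧
    ∀ z ∈ UHP, h z ≠ 0 ∧ f z = g z / h z

/-- `T` is the total inner component of `f ∈ K_θ`: if `f = I₁·g` with `I₁` inner and `g`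
outer on `ℂ₊`, and `conj θ · f = conj (I₂ · g)` a.e. on `ℝ` with `I₂` inner,
then `T = I₁·I₂`. -/
def IsTotalInnerComponent (θ f T : ℂ → ℂ) : Prop :=
  ∃ I₁ I₂ g : ℂ → ℂ, IsInner I₁ ∧ IsInner I₂ ∧ IsOuter g ∧
    (∀ z ∈ UHP, f z = I₁ z * g z) ∧
    (∀ᵐ x : ℝ, star (bdry θ x) * bdry f x = star (bdry I₂ x * bdry g x)) ∧
    ∀ z ∈ UHP, T z = I₁ z * I₂ z

/-- `T` is the total inner component of `F ∈ B(E)`: `F = I₁·f·E` and `F^# = I₂·f·E`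
on `ℂ₊` with `I₁, I₂` inner and `f` outer; then `T = I₁·I₂`. -/
def IsDBTotal (E F T : ℂ → ℂ) : Prop :=
  ∃ I₁ I₂ f : ℂ → ℂ, IsInner I₁ ∧ IsInner I₂ ∧ IsOuter f ∧ MemH2 f ∧
    (∀ z ∈ UHP, F z = I₁ z * f z * E z) ∧
    (∀ z ∈ UHP, Esharp F z = I₂ z * f z * E z) ∧
    ∀ z ∈ UHP, T z = I₁ z * I₂ z

/-- Clark (Herglotz) representation of an inner function `θ`: the measure `μ` on `ℝ`
together with the point mass `p ≥ 0` at infinity. -/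
def IsClarkOf (μ : Measure ℝ) (p : ℝ) (θ : ℂ → ℂ) : Prop :=
  0 ≤ p ∧ ∀ z ∈ UHP, ((1 + θ z) / (1 - θ z)).re =
    p * z.im + (1 / Real.pi) * ∫ t : ℝ, z.im / ((z.re - t) ^ 2 + z.im ^ 2) ∂μ

/-- The singular inner function `S^a(z) = e^{iaz}`. -/
def Sfun (a : ℝ) : ℂ → ℂ := fun z => Complex.exp (Complex.I * a * z)


/-!
If `conj I₁ · I₂ · g = conj G` with `g, G ∈ H^∞`, and `f ∈ N[conj I₂ · J]` is nonzero with
`conj I₂ · J · f = conj h`, then, since `conj I₂ · I₂ = 1` a.e. on `ℝ`, the product `g f` satisfies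
`conj I₁ · J · g f = conj (G h)`. Multiplication by `H^∞` preserves `H²`, and `g f ≠ 0` by the
identity theorem, so `g f` is a nonzero element of `N[conj I₁ · J]`.
-/

lemma isOpen_UHP : IsOpen UHP := isOpen_lt continuous_const Complex.continuous_im

lemma isPreconnected_UHP : IsPreconnected UHP := (convex_halfSpace_im_gt 0).isPreconnected

lemma ofReal_add_mul_I_mem_UHP {x y : ℝ} (hy : 0 < y) : (x : ℂ) + y * Complex.I ∈ UHP := by
  simpa [UHP] using hy

section Boundary

variable {f g : ℂ → ℂ} {x : ℝ}

lemma bdry_mul (hf : HasBdry f x) (hg : HasBdry g x) :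
    bdry (fun z => f z * g z) x = bdry f x * bdry g x :=
  (hf.mul hg).limUnder_eq

lemma HasBdry.mul (hf : HasBdry f x) (hg : HasBdry g x) : HasBdry (fun z => f z * g z) x := by
  rw [HasBdry, bdry_mul hf hg]
  exact Filter.Tendsto.mul hf hg

end Boundary

lemma MemHinf.mul_memH2 {g f : ℂ → ℂ} (hg : MemHinf g) (hf : MemH2 f) :
    MemH2 (fun z => g z * f z) := by
  obtain ⟨hgd, hgb, M, hM⟩ := hg
  obtain ⟨hfd, hfb, Mf, hMf, hMfb⟩ := hf
  refine ⟨hgd.mul hfd, ?_, ?_⟩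
  · filter_upwards [hgb, hfb] with x hgx hfx using hgx.mul hfx
  set C : ℝ≥0 := M.toNNReal
  refine ⟨(C : ℝ≥0∞) ^ 2 * Mf, ENNReal.mul_ne_top (by simp) hMf, fun y hy => ?_⟩
  have hpointwise : ∀ x : ℝ,
      (‖g ((x:ℂ) + y * Complex.I) * f ((x:ℂ) + y * Complex.I)‖₊ : ℝ≥0∞) ^ 2
        ≤ (C : ℝ≥0∞) ^ 2 * (‖f ((x:ℂ) + y * Complex.I)‖₊ : ℝ≥0∞) ^ 2 := by
    intro x
    have hgC : ‖g ((x:ℂ) + y * Complex.I)‖₊ ≤ C := by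
      rw [← NNReal.coe_le_coe]
      exact (hM _ (ofReal_add_mul_I_mem_UHP hy)).trans (Real.le_coe_toNNReal M)
    rw [← mul_pow, nnnorm_mul, ENNReal.coe_mul]
    gcongr
  calc (∫⁻ x : ℝ, (‖g ((x:ℂ) + y * Complex.I) * f ((x:ℂ) + y * Complex.I)‖₊ : ℝ≥0∞) ^ 2)
      ≤ ∫⁻ x : ℝ, (C : ℝ≥0∞) ^ 2 * (‖f ((x:ℂ) + y * Complex.I)‖₊ : ℝ≥0∞) ^ 2 :=
        lintegral_mono hpointwise
    _ = (C : ℝ≥0∞) ^ 2 * ∫⁻ x : ℝ, (‖f ((x:ℂ) + y * Complex.I)‖₊ : ℝ≥0∞) ^ 2 :=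
        lintegral_const_mul' _ _ (by simp)
    _ ≤ (C : ℝ≥0∞) ^ 2 * Mf := by gcongr; exact hMfb y hy

lemma NontrivialOnUHP.mul {g f : ℂ → ℂ} (hgd : DifferentiableOn ℂ g UHP)
    (hfd : DifferentiableOn ℂ f UHP) (hg : NontrivialOnUHP g) (hf : NontrivialOnUHP f) :
    NontrivialOnUHP (fun z => g z * f z) := by
  by_contra hzero
  simp only [NontrivialOnUHP, not_exists, not_and, not_not] at hzero
  obtain ⟨zg, hzg, hgzg⟩ := hg
  obtain ⟨zf, hzf, hfzf⟩ := hf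
  have hg_ne : ∀ᶠ z in 𝓝 zg, g z ≠ 0 :=
    (hgd.continuousOn.continuousAt (isOpen_UHP.mem_nhds hzg)).eventually_ne hgzg
  have hf_zero : f =ᶠ[𝓝 zg] 0 := by
    filter_upwards [hg_ne, isOpen_UHP.mem_nhds hzg] with z hgz hz
    exact (mul_eq_zero.1 (hzero z hz)).resolve_left hgz
  exact hfzf <| (hfd.analyticOnNhd isOpen_UHP).eqOn_zero_of_preconnected_of_eventuallyEq_zero
    isPreconnected_UHP hzg hf_zero hzf

lemma MemKer.congr_ae {U V : ℝ → ℂ} {f : ℂ → ℂ} (hf : MemKer U f) (hUV : U =ᵐ[volume] V) :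
    MemKer V f := by
  obtain ⟨hfH2, h, hh, hUf⟩ := hf
  refine ⟨hfH2, h, hh, ?_⟩
  filter_upwards [hUf, hUV] with x hx hUVx
  rwa [← hUVx]

lemma MemKer.mul_of_memHinf {U V : ℝ → ℂ} {f g G : ℂ → ℂ} (hf : MemKer U f)
    (hg : MemHinf g) (hG : MemHinf G) (hgG : ∀ᵐ x : ℝ, V x * bdry g x = star (bdry G x)) :
    MemKer (fun x => V x * U x) (fun z => g z * f z) := by
  obtain ⟨hfH2, h, hh, hUf⟩ := hf
  refine ⟨hg.mul_memH2 hfH2, fun z => G z * h z, hG.mul_memH2 hh, ?_⟩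
  filter_upwards [hUf, hgG, hg.2.1, hfH2.2.1, hG.2.1, hh.2.1] with x hUfx hgGx hgx hfx hGx hhx
  rw [bdry_mul hgx hfx, bdry_mul hGx hhx, star_mul', ← hUfx, ← hgGx]
  ring

lemma symb_ae_eq_mul {θ I J : ℂ → ℂ} (hI : IsInner I) :
    symb θ J =ᵐ[volume] fun x => symb θ I x * symb I J x := by
  filter_upwards [hI.2.2] with x hx
  have hunit : star (bdry I x) * bdry I x = 1 := by
    rw [Complex.star_def, Complex.conj_mul', hx.2]
    norm_num
  simp only [symb]
  linear_combination (-(star (bdry θ x) * bdry J x)) * hunit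

theorem dom_subset_of_Hinf_kernel_nontrivial_general (I₁ I₂ : ℂ → ℂ)
    (h₂ : IsInner I₂)
    (g : ℂ → ℂ) (hg : MemHinf g) (hgne : NontrivialOnUHP g)
    (hker : ∃ G : ℂ → ℂ, MemHinf G ∧
      ∀ᵐ x : ℝ, star (bdry I₁ x) * bdry I₂ x * bdry g x = star (bdry G x)) :
    Dom I₂ ⊆ Dom I₁ := by
  rintro J ⟨hJ, f, hf, hfne⟩
  obtain ⟨G, hG, hgG⟩ := hker
  exact ⟨hJ, fun z => g z * f z,
    (hf.mul_of_memHinf hg hG hgG).congr_ae (symb_ae_eq_mul h₂).symm,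
    hgne.mul hg.1 hf.1.1 hfne⟩

/-- Lemma 1. If `I₁, I₂` are non-constant inner functions with
`N^∞[conj I₁ · I₂] ≠ 0`, then `I₂ ⪯ I₁`, i.e., `D(I₂) ⊆ D(I₁)`. -/
theorem dom_subset_of_Hinf_kernel_nontrivial (I₁ I₂ : ℂ → ℂ)
    (h₁ : IsInner I₁) (h₂ : IsInner I₂)
    (hnc₁ : ¬ ∃ c : ℂ, ∀ z ∈ UHP, I₁ z = c)
    (hnc₂ : ¬ ∃ c : ℂ, ∀ z ∈ UHP, I₂ z = c)
    (g : ℂ → ℂ) (hg : MemHinf g) (hgne : NontrivialOnUHP g)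
    (hker : ∃ G : ℂ → ℂ, MemHinf G ∧
      ∀ᵐ x : ℝ, star (bdry I₁ x) * bdry I₂ x * bdry g x = star (bdry G x)) :
    Dom I₂ ⊆ Dom I₁ :=
  dom_subset_of_Hinf_kernel_nontrivial_general I₁ I₂ h₂ g hg hgne hker

end
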